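/- Let s ≥ 2 be an integer, let N ∈ ℕ, and let a, b be digit sequences such that: a N ≥ 1; for n > N, a n = s − 1 if n − N is odd and a n = 0 if n − N is even; b n = a n for n < N, b N = a N − 1; and for n > N, b n = 0 if n − N is odd and b n = s − 1 if n − N is even. Then a and b have the same nega-s-adic value, ∑_{n=0}^∞ (−1)^{n+1} a n / s^{n+1} = ∑_{n=0}^∞ (−1)^{n+1} b n / s^{n+1}, but different s-adic values: ∑_{n=0}^∞ a n / s^{n+1} ≠ ∑_{n=0}^∞ b n / s^{n+1}. (Paper's Lemma 1 for the function f₊⁻¹: the two nega-s-adic representations of a nega-s-adic rational number are sent by f₊⁻¹ to different values.) -/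

import Mathlib

/-!
Both values are the power series `∑ a n x^(n+1)`, evaluated at `x = -1/s` (nega-s-adic)
and at `x = 1/s` (s-adic). The digit difference `a - b` vanishes before `N`, is `1` at `N`
and then alternates `s - 1, -(s - 1), …`, so the difference of the two series sums to
`x^(N+1) + (s - 1) x^(N+2) / (1 + x) = x^(N+1) (1 + s x) / (1 + x)`,
which vanishes at `x = -1/s` and is positive at `x = 1/s`.
-/

open Finset

theorem summable_mul_pow_succ_of_abs_le {f : ℕ → ℝ} {C x : ℝ} (hf : ∀ n, |f n| ≤ C)
    (hx : |x| < 1) : Summable fun n => f n * x ^ (n + 1) := by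
  refine .of_norm_bounded ((summable_geometric_of_abs_lt_one (abs_abs x ▸ hx)).mul_left C)
    fun n => ?_
  have hC : 0 ≤ C := (abs_nonneg _).trans (hf 0)
  rw [Real.norm_eq_abs, abs_mul, abs_pow]
  exact mul_le_mul (hf n) (pow_le_pow_of_le_one (abs_nonneg x) hx.le n.le_succ)
    (by positivity) hC

theorem summable_digits_mul_pow {s : ℕ} {a : ℕ → ℕ} (ha : ∀ n, a n ≤ s - 1) {x : ℝ}
    (hx : |x| < 1) : Summable fun n => (a n : ℝ) * x ^ (n + 1) :=
  summable_mul_pow_succ_of_abs_le (C := s)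
    (fun n => by rw [Nat.abs_cast]; exact_mod_cast (ha n).trans (Nat.sub_le s 1)) hx

theorem hasSum_mul_pow_succ_of_alternating_tail {d : ℕ → ℝ} {c x : ℝ} {N : ℕ}
    (hx : |x| < 1) (hlt : ∀ n < N, d n = 0) (hN : d N = 1)
    (htail : ∀ i, d (N + 1 + i) = (-1) ^ i * c) :
    HasSum (fun n => d n * x ^ (n + 1)) (x ^ (N + 1) + c * x ^ (N + 2) / (1 + x)) := by
  rw [← hasSum_nat_add_iff' (N + 1)]
  have head : ∑ i ∈ range (N + 1), d i * x ^ (i + 1) = x ^ (N + 1) := by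
    rw [sum_range_succ, sum_eq_zero fun i hi => by rw [hlt i (mem_range.1 hi), zero_mul], hN]
    ring
  have geom := (hasSum_geometric_of_abs_lt_one (r := -x) (by rwa [abs_neg])).mul_left
    (c * x ^ (N + 2))
  have term (i : ℕ) : d (i + (N + 1)) * x ^ (i + (N + 1) + 1) = c * x ^ (N + 2) * (-x) ^ i := by
    rw [add_comm i, htail]
    ring
  rw [head, add_sub_cancel_left, funext term]
  rwa [sub_neg_eq_add, ← div_eq_mul_inv] at geom

theorem hasSum_digit_sub_mul_pow {s N : ℕ} {a b : ℕ → ℕ} {x : ℝ} (hx : |x| < 1)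
    (haN : 1 ≤ a N)
    (haTailOdd : ∀ n > N, Odd (n - N) → a n = s - 1)
    (haTailEven : ∀ n > N, Even (n - N) → a n = 0)
    (hbBefore : ∀ n < N, b n = a n) (hbN : b N = a N - 1)
    (hbTailOdd : ∀ n > N, Odd (n - N) → b n = 0)
    (hbTailEven : ∀ n > N, Even (n - N) → b n = s - 1) :
    HasSum (fun n => ((a n : ℝ) - b n) * x ^ (n + 1))
      (x ^ (N + 1) + ((s - 1 : ℕ) : ℝ) * x ^ (N + 2) / (1 + x)) := by
  refine hasSum_mul_pow_succ_of_alternating_tail hx (fun n hn => by rw [hbBefore n hn, sub_self])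
    (by rw [hbN, Nat.cast_sub haN, Nat.cast_one, sub_sub_cancel]) fun i => ?_
  have hgt : N + 1 + i > N := by omega
  have hsub : N + 1 + i - N = i + 1 := by omega
  rcases Nat.even_or_odd i with hi | hi
  · rw [haTailOdd _ hgt (hsub ▸ hi.add_one), hbTailOdd _ hgt (hsub ▸ hi.add_one),
      hi.neg_one_pow]
    simp
  · rw [haTailEven _ hgt (hsub ▸ hi.add_one), hbTailEven _ hgt (hsub ▸ hi.add_one),
      hi.neg_one_pow]
    simp

theorem stmt_2 (s : ℕ) (hs : 2 ≤ s) (N : ℕ) (a b : ℕ → ℕ)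
    (ha : ∀ n, a n ≤ s - 1) (hb : ∀ n, b n ≤ s - 1)
    (haN : 1 ≤ a N)
    (haTailOdd : ∀ n > N, Odd (n - N) → a n = s - 1)
    (haTailEven : ∀ n > N, Even (n - N) → a n = 0)
    (hbBefore : ∀ n < N, b n = a n) (hbN : b N = a N - 1)
    (hbTailOdd : ∀ n > N, Odd (n - N) → b n = 0)
    (hbTailEven : ∀ n > N, Even (n - N) → b n = s - 1) :
    (∑' n : ℕ, (-1 : ℝ) ^ (n + 1) * (a n : ℝ) / (s : ℝ) ^ (n + 1)) =
      (∑' n : ℕ, (-1 : ℝ) ^ (n + 1) * (b n : ℝ) / (s : ℝ) ^ (n + 1)) ∧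
    (∑' n : ℕ, (a n : ℝ) / (s : ℝ) ^ (n + 1)) ≠
      (∑' n : ℕ, (b n : ℝ) / (s : ℝ) ^ (n + 1)) := by
  have hs' : (2 : ℝ) ≤ s := by exact_mod_cast hs
  have hxPos : |1 / (s : ℝ)| < 1 := by
    rw [abs_div, abs_one, Nat.abs_cast, div_lt_one] <;> linarith
  have hxNeg : |-1 / (s : ℝ)| < 1 := by rwa [neg_div, abs_neg]
  have key (x : ℝ) (hx : |x| < 1) :
      ∑' n, (a n : ℝ) * x ^ (n + 1) - ∑' n, (b n : ℝ) * x ^ (n + 1) =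
        x ^ (N + 1) + ((s - 1 : ℕ) : ℝ) * x ^ (N + 2) / (1 + x) := by
    rw [← (summable_digits_mul_pow ha hx).tsum_sub (summable_digits_mul_pow hb hx)]
    simp_rw [← sub_mul]
    exact (hasSum_digit_sub_mul_pow hx haN haTailOdd haTailEven hbBefore hbN hbTailOdd
      hbTailEven).tsum_eq
  have nega (c : ℕ → ℕ) : ∑' n, (-1 : ℝ) ^ (n + 1) * c n / (s : ℝ) ^ (n + 1) =
      ∑' n, (c n : ℝ) * (-1 / s) ^ (n + 1) := tsum_congr fun n => by rw [div_pow]; ring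
  have adic (c : ℕ → ℕ) : ∑' n, (c n : ℝ) / (s : ℝ) ^ (n + 1) =
      ∑' n, (c n : ℝ) * (1 / s) ^ (n + 1) := tsum_congr fun n => by rw [div_pow]; ring
  rw [nega, nega, adic, adic, ← sub_eq_zero, key _ hxNeg, ← sub_ne_zero, key _ hxPos]
  constructor
  · have hx1 : 1 + -1 / (s : ℝ) = ((s : ℝ) - 1) / s := by field_simp; ring
    have hs1 : (s : ℝ) - 1 ≠ 0 := by linarith
    rw [Nat.cast_sub (by omega), Nat.cast_one, hx1, pow_succ (-1 / (s : ℝ)) (N + 1)]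
    field_simp
    ring
  · positivity
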